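/- arXiv:1505.03827 — 3 statements merged into one kernel-verified Lean document; each statement's English description precedes it below -/
import Mathlib

section
/- Under the NIN existence conditions e_1 > ... > e_n, r_1 > ... > r_n, Q_n < r_n, there exists a unique equilibrium E† of the nested infection network system with all components positive except P_n = 0; it is given by H_j† = H_j* for j < n, H_n† = H_n* + P_n*/a_n, P_j† = P_j* for j < n, P_n† = 0, where (H*, P*) is the positive equilibrium. -/
open Filter Finset

/-- `H*` components of the nested-infection-network positive equilibrium. -/
noncomputable def HstarNIN (e : ℕ → ℝ) : ℕ → ℝ
  | 0 => 1 / e 0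
  | (j + 1) => 1 / e (j + 1) - 1 / e j

/-- `Q_n = Σ_j a_j H_j*`. -/
noncomputable def QNIN (n : ℕ) (a e : ℕ → ℝ) : ℝ :=
  ∑ j ∈ Finset.range n, a j * HstarNIN e j

/-- `P*` components: `P_j* = r_j − r_{j+1}` for `j < n−1`, `P_{n-1}* = r_{n-1} − Q_n`
(0-based indexing). -/
noncomputable def PstarNIN (n : ℕ) (r a e : ℕ → ℝ) (j : ℕ) : ℝ :=
  if j = n - 1 then r j - QNIN n a e else r j - r (j + 1)

/-- `(h, p)` is an equilibrium of the NIN system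
`H_i' = H_i(r_i − Σ_j a_j H_j − Σ_{j ≥ i} P_j)`, `P_i' = e_i n_i P_i(Σ_{j ≤ i} H_j − 1/e_i)`. -/
def isEqNIN (n : ℕ) (r a e ν : ℕ → ℝ) (h p : ℕ → ℝ) : Prop :=
  (∀ i < n, h i * (r i - (∑ j ∈ Finset.range n, a j * h j) - ∑ j ∈ Finset.Ico i n, p j) = 0) ∧
  (∀ i < n, e i * ν i * p i * ((∑ j ∈ Finset.range (i + 1), h j) - 1 / e i) = 0)


/-- `H†` components: `H_j† = H_j*` for `j < n−1`, `H_{n-1}† = H_{n-1}* + P_{n-1}*/a_{n-1}`. -/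
noncomputable def HdagNIN (n : ℕ) (r a e : ℕ → ℝ) (j : ℕ) : ℝ :=
  if j = n - 1 then HstarNIN e j + PstarNIN n r a e j / a j else HstarNIN e j

/-- `P†` components: `P_j† = P_j*` for `j < n−1`, `P_{n-1}† = 0`. -/
noncomputable def PdagNIN (n : ℕ) (r a e : ℕ → ℝ) (j : ℕ) : ℝ :=
  if j = n - 1 then 0 else PstarNIN n r a e j

/-!
At an equilibrium with `H > 0` and `P_j > 0` for `j < n`, every bracket in the
equations must vanish.  The `P`-brackets fix the partial sums `H_1 + ⋯ + H_j = 1/e_j` for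
`j < n`, hence `H_j = H_j*` there; the `H`-bracket of index `n` (where `P_n = 0`) gives
`Σ a_j H_j = r_n`, which determines `H_n`; and differences of consecutive `H`-brackets give
`P_j = r_j − r_{j+1}`.  Conversely these values solve the bracket equations, and they are positive
by the orderings of `e` and `r` and by `Q_n < r_n`.
-/

lemma sum_range_succ_HstarNIN (e : ℕ → ℝ) (i : ℕ) :
    ∑ j ∈ range (i + 1), HstarNIN e j = 1 / e i := by
  induction i with
  | zero => simp [HstarNIN]
  | succ k ih => rw [sum_range_succ, ih, HstarNIN]; ring

lemma HstarNIN_pos {n : ℕ} {e : ℕ → ℝ} (he : ∀ i < n, 0 < e i)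
    (heord : ∀ i, i + 1 < n → e (i + 1) < e i) {i : ℕ} (hi : i < n) : 0 < HstarNIN e i := by
  cases i with
  | zero => exact one_div_pos.mpr (he 0 hi)
  | succ k =>
    rw [HstarNIN, sub_pos]
    exact one_div_lt_one_div_of_lt (he _ hi) (heord k hi)

lemma HdagNIN_of_ne {n j : ℕ} (r a e : ℕ → ℝ) (hj : j ≠ n - 1) :
    HdagNIN n r a e j = HstarNIN e j := if_neg hj

lemma PdagNIN_of_eq {n j : ℕ} (r a e : ℕ → ℝ) (hj : j = n - 1) : PdagNIN n r a e j = 0 :=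
  if_pos hj

lemma PdagNIN_of_ne {n j : ℕ} (r a e : ℕ → ℝ) (hj : j ≠ n - 1) :
    PdagNIN n r a e j = r j - r (j + 1) := by
  rw [PdagNIN, if_neg hj, PstarNIN, if_neg hj]

lemma HdagNIN_pos {n : ℕ} {r a e : ℕ → ℝ} (ha : ∀ i < n, 0 < a i) (he : ∀ i < n, 0 < e i)
    (heord : ∀ i, i + 1 < n → e (i + 1) < e i) (hQ : QNIN n a e < r (n - 1)) {i : ℕ}
    (hi : i < n) : 0 < HdagNIN n r a e i := by
  rcases eq_or_ne i (n - 1) with rfl | hne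
  · rw [HdagNIN, if_pos rfl, PstarNIN, if_pos rfl]
    have := div_pos (sub_pos.mpr hQ) (ha _ hi)
    linarith [HstarNIN_pos he heord hi]
  · rw [HdagNIN_of_ne r a e hne]
    exact HstarNIN_pos he heord hi

lemma PdagNIN_pos {n : ℕ} (r a e : ℕ → ℝ) (hrord : ∀ i, i + 1 < n → r (i + 1) < r i) {i : ℕ}
    (hi : i + 1 < n) : 0 < PdagNIN n r a e i := by
  rw [PdagNIN_of_ne r a e (by omega), sub_pos]
  exact hrord i hi

lemma sum_Ico_PdagNIN {n i : ℕ} (r a e : ℕ → ℝ) (hi : i < n) :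
    ∑ j ∈ Ico i n, PdagNIN n r a e j = r i - r (n - 1) := by
  obtain ⟨m, rfl⟩ : ∃ m, n = m + 1 := ⟨n - 1, by omega⟩
  rw [sum_Ico_succ_top (by omega), PdagNIN_of_eq r a e (by omega), add_zero,
    sum_congr rfl fun j hj => PdagNIN_of_ne r a e (by simp at hj; omega),
    add_tsub_cancel_right]
  simpa only [← sum_neg_distrib, neg_sub] using
    congrArg Neg.neg (sum_Ico_sub r (Nat.le_of_lt_succ hi))

lemma sum_range_mul_HdagNIN {n : ℕ} (hn : 0 < n) (r a e : ℕ → ℝ) (ha : a (n - 1) ≠ 0) :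
    ∑ j ∈ range n, a j * HdagNIN n r a e j = r (n - 1) := by
  obtain ⟨m, rfl⟩ : ∃ m, n = m + 1 := ⟨n - 1, by omega⟩
  simp only [add_tsub_cancel_right] at ha ⊢
  rw [sum_range_succ, sum_congr rfl fun j hj => by
    rw [HdagNIN_of_ne r a e (by simp at hj; omega)]]
  rw [HdagNIN, if_pos (by omega), PstarNIN, if_pos (by omega), QNIN, sum_range_succ]
  field_simp
  ring

/-- The equilibrium equations of the NIN system with the factors `H_i` (all `i`) and
`e_i ν_i P_i` (`i < n - 1`) cancelled, on the face `P_{n-1} = 0` (0-based indexing). -/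
def BracketsVanishNIN (n : ℕ) (r a e : ℕ → ℝ) (h p : ℕ → ℝ) : Prop :=
  (∀ i < n, r i - ∑ j ∈ range n, a j * h j - ∑ j ∈ Ico i n, p j = 0) ∧
  (∀ i, i + 1 < n → ∑ j ∈ range (i + 1), h j = 1 / e i) ∧
  p (n - 1) = 0

lemma isEqNIN_of_bracketsVanishNIN {n : ℕ} {r a e h p : ℕ → ℝ} (ν : ℕ → ℝ)
    (hb : BracketsVanishNIN n r a e h p) : isEqNIN n r a e ν h p := by
  obtain ⟨hH, hP, hlast⟩ := hb
  refine ⟨fun i hi => by rw [hH i hi, mul_zero], fun i hi => ?_⟩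
  rcases eq_or_ne i (n - 1) with rfl | hne
  · rw [hlast]; ring
  · rw [hP i (by omega), sub_self, mul_zero]

lemma bracketsVanishNIN_of_isEqNIN {n : ℕ} {r a e ν h p : ℕ → ℝ}
    (he : ∀ i < n, 0 < e i) (hν : ∀ i < n, 0 < ν i)
    (hh : ∀ i < n, 0 < h i) (hp : ∀ i, i + 1 < n → 0 < p i) (hlast : p (n - 1) = 0)
    (heq : isEqNIN n r a e ν h p) : BracketsVanishNIN n r a e h p := by
  obtain ⟨hH, hP⟩ := heq
  refine ⟨fun i hi => (mul_eq_zero.mp (hH i hi)).resolve_left (hh i hi).ne', fun i hi => ?_, hlast⟩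
  have hfactor : e i * ν i * p i ≠ 0 := by
    have := he i (by omega); have := hν i (by omega); have := hp i hi
    positivity
  exact sub_eq_zero.mp ((mul_eq_zero.mp (hP i (by omega))).resolve_left hfactor)

lemma bracketsVanishNIN_HdagNIN_PdagNIN {n : ℕ} (hn : 0 < n) (r a e : ℕ → ℝ)
    (ha : a (n - 1) ≠ 0) :
    BracketsVanishNIN n r a e (HdagNIN n r a e) (PdagNIN n r a e) := by
  refine ⟨fun i hi => ?_, fun i hi => ?_, PdagNIN_of_eq r a e rfl⟩
  · rw [sum_range_mul_HdagNIN hn r a e ha, sum_Ico_PdagNIN r a e hi]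
    ring
  · rw [sum_congr rfl fun j hj => HdagNIN_of_ne r a e (by simp at hj; omega),
      sum_range_succ_HstarNIN]

lemma eq_of_sum_range_succ_eq {M : Type*} [AddCommGroup M] {m : ℕ} {f g : ℕ → M}
    (hfg : ∀ i < m, ∑ j ∈ range (i + 1), f j = ∑ j ∈ range (i + 1), g j) {i : ℕ} (hi : i < m) :
    f i = g i := by
  have hprev : ∑ j ∈ range i, f j = ∑ j ∈ range i, g j := by
    cases i with
    | zero => simp
    | succ k => exact hfg k (by omega)
  rw [← sum_range_succ_sub_sum f, ← sum_range_succ_sub_sum g, hfg i hi, hprev]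

lemma BracketsVanishNIN.eq {n : ℕ} (hn : 0 < n) {r a e h p h' p' : ℕ → ℝ}
    (ha : a (n - 1) ≠ 0) (hb : BracketsVanishNIN n r a e h p)
    (hb' : BracketsVanishNIN n r a e h' p') {i : ℕ} (hi : i < n) : h i = h' i ∧ p i = p' i := by
  obtain ⟨hH, hP, hlast⟩ := hb
  obtain ⟨hH', hP', hlast'⟩ := hb'
  have hIco_last : Ico (n - 1) n = {n - 1} := by ext; simp; omega
  have htotal : ∀ q : ℕ → ℝ, q (n - 1) = 0 → ∑ j ∈ Ico (n - 1) n, q j = 0 := fun q hq => by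
    rw [hIco_last, sum_singleton, hq]
  have hS : ∑ j ∈ range n, a j * h j = ∑ j ∈ range n, a j * h' j := by
    linarith [hH (n - 1) (by omega), hH' (n - 1) (by omega), htotal p hlast, htotal p' hlast']
  have hinit : ∀ j < n - 1, h j = h' j := fun j hj =>
    eq_of_sum_range_succ_eq (fun k hk => by rw [hP k (by omega), hP' k (by omega)]) hj
  have hIco : ∀ k ≤ n, ∑ j ∈ Ico k n, p j = ∑ j ∈ Ico k n, p' j := fun k hk => by
    rcases hk.lt_or_eq with hk | rfl
    · linarith [hH k hk, hH' k hk]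
    · simp
  refine ⟨?_, ?_⟩
  · rcases eq_or_ne i (n - 1) with rfl | hne
    · obtain ⟨m, rfl⟩ : ∃ m, n = m + 1 := ⟨n - 1, by omega⟩
      simp only [add_tsub_cancel_right] at ha hinit ⊢
      rw [sum_range_succ, sum_range_succ,
        sum_congr rfl fun j hj => by rw [hinit j (mem_range.mp hj)]] at hS
      exact mul_left_cancel₀ ha (add_left_cancel hS)
    · exact hinit i (by omega)
  · have := hIco i hi.le
    rw [sum_eq_sum_Ico_succ_bot hi, sum_eq_sum_Ico_succ_bot hi, hIco (i + 1) hi] at this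
    exact add_right_cancel this

theorem statement3_general
    (n : ℕ) (hn : 0 < n) (r a e ν : ℕ → ℝ)
    (ha : ∀ i < n, 0 < a i)
    (he : ∀ i < n, 0 < e i) (hν : ∀ i < n, 0 < ν i)
    (heord : ∀ i, i + 1 < n → e (i + 1) < e i)
    (hrord : ∀ i, i + 1 < n → r (i + 1) < r i)
    (hQ : QNIN n a e < r (n - 1)) :
    ((∀ i < n, 0 < HdagNIN n r a e i) ∧ (∀ i, i + 1 < n → 0 < PdagNIN n r a e i) ∧
      PdagNIN n r a e (n - 1) = 0 ∧ isEqNIN n r a e ν (HdagNIN n r a e) (PdagNIN n r a e)) ∧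
    (∀ h p : ℕ → ℝ, (∀ i < n, 0 < h i) → (∀ i, i + 1 < n → 0 < p i) → p (n - 1) = 0 →
      isEqNIN n r a e ν h p →
      ∀ i < n, h i = HdagNIN n r a e i ∧ p i = PdagNIN n r a e i) := by
  have han : 0 < a (n - 1) := ha _ (by omega)
  have hdag := bracketsVanishNIN_HdagNIN_PdagNIN hn r a e han.ne'
  refine ⟨⟨fun i hi => HdagNIN_pos ha he heord hQ hi, fun i hi => PdagNIN_pos r a e hrord hi,
    PdagNIN_of_eq r a e rfl, isEqNIN_of_bracketsVanishNIN ν hdag⟩, ?_⟩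
  intro h p hh hp hplast heq i hi
  exact (bracketsVanishNIN_of_isEqNIN he hν hh hp hplast heq).eq hn han.ne' hdag hi

/-- under the NIN existence conditions there is a unique equilibrium `E†`
with all components positive except `P_n = 0`, given by the explicit formulas. -/
theorem statement3
    (n : ℕ) (hn : 0 < n) (r a e ν : ℕ → ℝ)
    (hr : ∀ i < n, 0 < r i) (ha : ∀ i < n, 0 < a i)
    (he : ∀ i < n, 0 < e i) (hν : ∀ i < n, 0 < ν i)
    (heord : ∀ i, i + 1 < n → e (i + 1) < e i)
    (hrord : ∀ i, i + 1 < n → r (i + 1) < r i)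
    (hQ : QNIN n a e < r (n - 1)) :
    ((∀ i < n, 0 < HdagNIN n r a e i) ∧ (∀ i, i + 1 < n → 0 < PdagNIN n r a e i) ∧
      PdagNIN n r a e (n - 1) = 0 ∧ isEqNIN n r a e ν (HdagNIN n r a e) (PdagNIN n r a e)) ∧
    (∀ h p : ℕ → ℝ, (∀ i < n, 0 < h i) → (∀ i, i + 1 < n → 0 < p i) → p (n - 1) = 0 →
      isEqNIN n r a e ν h p →
      ∀ i < n, h i = HdagNIN n r a e i ∧ p i = PdagNIN n r a e i) :=
  statement3_general n hn r a e ν ha he hν heord hrord hQ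
end

section
/- In the nested infection network system, if i < j, P_i(0) > 0, and limsup_{t→∞} (H_{i+1}(t) + ... + H_j(t)) < 1/e_j − 1/e_i, then P_j(t) → 0 as t → ∞. -/
open Filter Finset

/-- `(H, P)` solves the NIN system
`H_i' = H_i(r_i − Σ_j a_j H_j − Σ_{j ≥ i} P_j)`, `P_i' = e_i n_i P_i(Σ_{j ≤ i} H_j − 1/e_i)`
for `t ≥ 0`. -/
def isSolNIN (n : ℕ) (r a e ν : ℕ → ℝ) (H P : ℝ → ℕ → ℝ) : Prop :=
  ∀ t ≥ (0:ℝ), ∀ i < n,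
    HasDerivAt (fun s => H s i)
      (H t i * (r i - (∑ j ∈ Finset.range n, a j * H t j) - ∑ j ∈ Finset.Ico i n, P t j)) t ∧
    HasDerivAt (fun s => P s i)
      (e i * ν i * P t i * ((∑ j ∈ Finset.range (i + 1), H t j) - 1 / e i)) t

open Real Topology

/-!
Write `c = e_j ν_j / (e_i ν_i)`. Comparing the logarithmic derivatives of `P_j` and `P_i`, the
quotient `G = P_j P_i^{-c}` satisfies `G' = e_j ν_j (H_{i+1} + ⋯ + H_j − (1/e_j − 1/e_i)) G`,
so eventually `G' ≤ −μ G` for some `μ > 0` and `G` decays exponentially by Grönwall's inequality.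
Since `P_i` stays positive (it cannot decay faster than `e^{−ν_i t}`) and bounded, so does
`P_i^c`, and `P_j = G P_i^c → 0`.
-/

theorem le_mul_exp_of_hasDerivAt_le_mul {f f' : ℝ → ℝ} {K a : ℝ}
    (hf : ∀ t ≥ a, HasDerivAt f (f' t) t) (bound : ∀ t ≥ a, f' t ≤ K * f t)
    {t : ℝ} (ht : a ≤ t) : f t ≤ f a * exp (K * (t - a)) := by
  have := le_gronwallBound_of_liminf_deriv_right_le (f' := f') (δ := f a) (ε := 0) (b := t)
    (fun x hx => (hf x hx.1).continuousAt.continuousWithinAt)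
    (fun x hx _ hr => (hf x hx.1).hasDerivWithinAt.liminf_right_slope_le hr) le_rfl
    (fun x hx => by simpa using bound x hx.1) t ⟨ht, le_rfl⟩
  rwa [gronwallBound_ε0] at this

theorem mul_exp_le_of_hasDerivAt_mul_le {f f' : ℝ → ℝ} {K a : ℝ}
    (hf : ∀ t ≥ a, HasDerivAt f (f' t) t) (bound : ∀ t ≥ a, K * f t ≤ f' t)
    {t : ℝ} (ht : a ≤ t) : f a * exp (K * (t - a)) ≤ f t := by
  have := le_mul_exp_of_hasDerivAt_le_mul (f := -f) (f' := -f') (K := K)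
    (fun t ht => (hf t ht).neg) (fun t ht => by simpa using bound t ht) ht
  simpa using this

theorem tendsto_zero_of_hasDerivAt_le_neg_mul {f f' : ℝ → ℝ} {μ a : ℝ} (hμ : 0 < μ)
    (hf : ∀ t ≥ a, HasDerivAt f (f' t) t) (bound : ∀ t ≥ a, f' t ≤ -μ * f t)
    (hf_nonneg : ∀ t ≥ a, 0 ≤ f t) : Tendsto f atTop (𝓝 0) := by
  have hdecay : Tendsto (fun t => f a * exp (-μ * (t - a))) atTop (𝓝 0) := by
    have : Tendsto (fun t => -μ * (t - a)) atTop atBot :=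
      (tendsto_atTop_add_const_right _ _ tendsto_id).const_mul_atTop_of_neg (neg_lt_zero.2 hμ)
    simpa using (tendsto_exp_atBot.comp this).const_mul (f a)
  refine squeeze_zero' ?_ ?_ hdecay
  · filter_upwards [eventually_ge_atTop a] with t ht using hf_nonneg t ht
  · filter_upwards [eventually_ge_atTop a] with t ht using
      le_mul_exp_of_hasDerivAt_le_mul hf bound ht

theorem HasDerivAt.mul_rpow_neg {f g : ℝ → ℝ} {α β c x : ℝ} (hf : HasDerivAt f (f x * α) x)
    (hg : HasDerivAt g (g x * β) x) (hgx : 0 < g x) :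
    HasDerivAt (fun y => f y * g y ^ (-c)) ((α - c * β) * (f x * g x ^ (-c))) x := by
  refine (hf.mul (hg.rpow_const (p := -c) (Or.inl hgx.ne'))).congr_deriv ?_
  rw [rpow_sub_one hgx.ne']
  field_simp
  ring

namespace isSolNIN

variable {n : ℕ} {r a e ν : ℕ → ℝ} {H P : ℝ → ℕ → ℝ}

theorem hasDerivAt_P (hsol : isSolNIN n r a e ν H P) {t : ℝ} (ht : 0 ≤ t) {i : ℕ} (hi : i < n) :
    HasDerivAt (fun s => P s i)
      (P t i * (e i * ν i * (∑ k ∈ range (i + 1), H t k - 1 / e i))) t :=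
  (hsol t ht i hi).2.congr_deriv (by ring)

theorem P_pos (hsol : isSolNIN n r a e ν H P)
    (hpos : ∀ t ≥ (0:ℝ), ∀ k < n, 0 ≤ H t k ∧ 0 ≤ P t k) {i : ℕ} (hi : i < n)
    (heν : 0 ≤ e i * ν i) (hP0 : 0 < P 0 i) {t : ℝ} (ht : 0 ≤ t) : 0 < P t i := by
  have bound : ∀ s ≥ (0:ℝ), -(e i * ν i * (1 / e i)) * P s i ≤
      P s i * (e i * ν i * (∑ k ∈ range (i + 1), H s k - 1 / e i)) := by
    intro s hs
    have hH : 0 ≤ ∑ k ∈ range (i + 1), H s k := sum_nonneg fun k hk =>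
      (hpos s hs k ((mem_range_succ_iff.1 hk).trans_lt hi)).1
    nlinarith [mul_nonneg (mul_nonneg (hpos s hs i hi).2 heν) hH]
  have := mul_exp_le_of_hasDerivAt_mul_le (fun s hs => hsol.hasDerivAt_P hs hi) bound ht
  exact lt_of_lt_of_le (by positivity) this

theorem hasDerivAt_P_mul_rpow (hsol : isSolNIN n r a e ν H P) {i j : ℕ} (hij : i ≤ j)
    (hj : j < n) (heν : e i * ν i ≠ 0) {t : ℝ} (ht : 0 ≤ t) (hPi : 0 < P t i) :
    HasDerivAt (fun s => P s j * P s i ^ (-(e j * ν j / (e i * ν i))))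
      (e j * ν j * (∑ k ∈ Icc (i + 1) j, H t k - (1 / e j - 1 / e i)) *
        (P t j * P t i ^ (-(e j * ν j / (e i * ν i))))) t := by
  refine ((hsol.hasDerivAt_P ht hj).mul_rpow_neg
    (hsol.hasDerivAt_P ht (hij.trans_lt hj)) hPi).congr_deriv ?_
  have hei : e i ≠ 0 := left_ne_zero_of_mul heν
  have hνi : ν i ≠ 0 := right_ne_zero_of_mul heν
  rw [← sum_range_add_sum_Ico _ (Nat.add_le_add_right hij 1), ← Ico_add_one_right_eq_Icc]
  field_simp
  ring

end isSolNIN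

theorem statement5_general
    (n : ℕ) (r a e ν : ℕ → ℝ)
    (he : ∀ i < n, 0 < e i) (hν : ∀ i < n, 0 < ν i)
    (H P : ℝ → ℕ → ℝ) (hsol : isSolNIN n r a e ν H P)
    (hpos : ∀ t ≥ (0:ℝ), ∀ k < n, 0 ≤ H t k ∧ 0 ≤ P t k)
    (hbdd : ∃ B : ℝ, ∀ t ≥ (0:ℝ), ∀ k < n, H t k ≤ B ∧ P t k ≤ B)
    (i j : ℕ) (hij : i < j) (hj : j < n)
    (hPi0 : 0 < P 0 i)
    (hls : Filter.limsup (fun t => ∑ k ∈ Finset.Icc (i + 1) j, H t k) Filter.atTop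
      < 1 / e j - 1 / e i) :
    Filter.Tendsto (fun t => P t j) Filter.atTop (nhds 0) := by
  obtain ⟨B, hB⟩ := hbdd
  have hi : i < n := hij.trans hj
  have heνi : 0 < e i * ν i := mul_pos (he i hi) (hν i hi)
  have heνj : 0 < e j * ν j := mul_pos (he j hj) (hν j hj)
  have hPi : ∀ t ≥ (0:ℝ), 0 < P t i := fun t ht => hsol.P_pos hpos hi heνi.le hPi0 ht
  obtain ⟨b, hb, hbL⟩ := exists_between hls
  have hsum_bdd : IsBoundedUnder (· ≤ ·) atTop fun t => ∑ k ∈ Icc (i + 1) j, H t k :=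
    isBoundedUnder_of_eventually_le (a := ∑ _k ∈ Icc (i + 1) j, B) <| by
      filter_upwards [eventually_ge_atTop 0] with t ht
      exact sum_le_sum fun k hk => (hB t ht k ((mem_Icc.1 hk).2.trans_lt hj)).1
  obtain ⟨T, hT⟩ := (eventually_lt_of_limsup_lt hb hsum_bdd).exists_forall_of_atTop
  set c := e j * ν j / (e i * ν i)
  have hG_nonneg : ∀ t ≥ (0:ℝ), 0 ≤ P t j * P t i ^ (-c) := fun t ht =>
    mul_nonneg (hpos t ht j hj).2 (rpow_nonneg (hPi t ht).le _)
  have hG : Tendsto (fun t => P t j * P t i ^ (-c)) atTop (𝓝 0) := by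
    refine tendsto_zero_of_hasDerivAt_le_neg_mul (a := max T 0) (mul_pos heνj (sub_pos.2 hbL))
      (fun t ht => hsol.hasDerivAt_P_mul_rpow hij.le hj heνi.ne' (le_of_max_le_right ht)
        (hPi t (le_of_max_le_right ht)))
      (fun t ht => mul_le_mul_of_nonneg_right ?_ (hG_nonneg t (le_of_max_le_right ht)))
      (fun t ht => hG_nonneg t (le_of_max_le_right ht))
    nlinarith [hT t (le_of_max_le_left ht)]
  have hPic_bdd : IsBoundedUnder (· ≤ ·) atTop (norm ∘ fun t => P t i ^ c) :=
    isBoundedUnder_of_eventually_le (a := B ^ c) <| by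
      filter_upwards [eventually_ge_atTop 0] with t ht
      rw [Function.comp_apply, norm_of_nonneg (rpow_nonneg (hPi t ht).le _)]
      exact rpow_le_rpow (hPi t ht).le (hB t ht i hi).2 (div_pos heνj heνi).le
  refine (hG.zero_mul_isBoundedUnder_le hPic_bdd).congr' ?_
  filter_upwards [eventually_ge_atTop 0] with t ht
  rw [mul_assoc, ← rpow_add (hPi t ht), neg_add_cancel, rpow_zero, mul_one]

/-- in the NIN system, if `i < j`, `P_i(0) > 0` and
`limsup_{t→∞} (H_{i+1} + ⋯ + H_j)(t) < 1/e_j − 1/e_i`, then `P_j(t) → 0`. -/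
theorem statement5
    (n : ℕ) (r a e ν : ℕ → ℝ)
    (hr : ∀ i < n, 0 < r i) (ha : ∀ i < n, 0 < a i)
    (he : ∀ i < n, 0 < e i) (hν : ∀ i < n, 0 < ν i)
    (heord : ∀ i, i + 1 < n → e (i + 1) < e i)
    (H P : ℝ → ℕ → ℝ) (hsol : isSolNIN n r a e ν H P)
    (hpos : ∀ t ≥ (0:ℝ), ∀ k < n, 0 ≤ H t k ∧ 0 ≤ P t k)
    (hbdd : ∃ B : ℝ, ∀ t ≥ (0:ℝ), ∀ k < n, H t k ≤ B ∧ P t k ≤ B)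
    (i j : ℕ) (hij : i < j) (hj : j < n)
    (hPi0 : 0 < P 0 i)
    (hls : Filter.limsup (fun t => ∑ k ∈ Finset.Icc (i + 1) j, H t k) Filter.atTop
      < 1 / e j - 1 / e i) :
    Filter.Tendsto (fun t => P t j) Filter.atTop (nhds 0) :=
  statement5_general n r a e ν he hν H P hsol hpos hbdd i j hij hj hPi0 hls
end

section
/- In the nested infection network system satisfying e_1 > ... > e_n, r_1 > ... > r_n and Q_n < r_n: if H_1(0) > 0 then limsup_{t→∞} H_1(t) ≥ 1/e_1; and if in addition P_1(0) > 0 then limsup_{t→∞} P_1(t) ≥ min{r_1 − r_2, (r_1 e_1 − a_1)/e_1}. -/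
open Filter Finset

/-!
Both claims are proved by contradiction, through time averages: `UpperMeanLE f α` says that
`∫₀ᵗ f ≤ α t + O(1)`. Let `g_i` be the per-capita growth rate of host `i` (index `i - 1` in the
code).

If `H_1` stays eventually below some `α < 1/e_1`, then `P_1` decays exponentially, so has mean
at most `β = 0`. If `P_1` stays eventually below some `β < min {r_1 - r_2, r_1 - a_1/e_1}`, then
`P_1` is bounded, hence so is the integral of its growth rate `e_1 ν_1 (H_1 - 1/e_1)`, and `H_1`
has mean at most `α = 1/e_1`. In both cases `α < 1/e_i` and `β < r_1 - r_i` for `i ≥ 2`, and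
`a_1 α + β < r_1`.

By induction on `i ≥ 2`, `H_i` and `P_i` have bounded integrals: `g_1` has mean at most `0`
because `H_1` is bounded, and `g_i - g_1 = r_i - r_1 + Σ_{j<i} P_j` has negative mean, so `H_i`
decays exponentially; then the growth rate `e_i ν_i (Σ_{j≤i} H_j - 1/e_i)` of `P_i` has negative
mean as well. Finally `-g_1 = Σ_j (a_j H_j + P_j) - r_1` has mean at most `a_1 α + β - r_1 < 0`,
which contradicts the mean bound `0` of `g_1`.
-/

open Real intervalIntegral

def UpperMeanLE (f : ℝ → ℝ) (α : ℝ) : Prop :=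
  (∀ t, IntervalIntegrable f MeasureTheory.volume 0 t) ∧
    ∃ C, ∀ t, 0 ≤ t → ∫ s in (0 : ℝ)..t, f s ≤ α * t + C

namespace UpperMeanLE

variable {f g : ℝ → ℝ} {α β : ℝ}

lemma mono (h : UpperMeanLE f α) (hαβ : α ≤ β) : UpperMeanLE f β := by
  obtain ⟨hf, C, hC⟩ := h
  exact ⟨hf, C, fun t ht => (hC t ht).trans (by nlinarith)⟩

lemma add (hf : UpperMeanLE f α) (hg : UpperMeanLE g β) :
    UpperMeanLE (fun s => f s + g s) (α + β) := by
  obtain ⟨hfi, C, hC⟩ := hf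
  obtain ⟨hgi, D, hD⟩ := hg
  refine ⟨fun t => (hfi t).add (hgi t), C + D, fun t ht => ?_⟩
  rw [integral_add (hfi t) (hgi t)]
  linarith [hC t ht, hD t ht]

lemma add_const (hf : UpperMeanLE f α) (c : ℝ) :
    UpperMeanLE (fun s => f s + c) (α + c) := by
  obtain ⟨hfi, C, hC⟩ := hf
  refine ⟨fun t => (hfi t).add intervalIntegrable_const, C, fun t ht => ?_⟩
  rw [integral_add (hfi t) intervalIntegrable_const, integral_const, smul_eq_mul]
  linarith [hC t ht]

lemma sub_const (hf : UpperMeanLE f α) (c : ℝ) :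
    UpperMeanLE (fun s => f s - c) (α - c) := by
  simpa only [sub_eq_add_neg] using hf.add_const (-c)

lemma const_mul (hf : UpperMeanLE f α) {c : ℝ} (hc : 0 ≤ c) :
    UpperMeanLE (fun s => c * f s) (c * α) := by
  obtain ⟨hfi, C, hC⟩ := hf
  refine ⟨fun t => (hfi t).const_mul c, c * C, fun t ht => ?_⟩
  rw [integral_const_mul]
  nlinarith [mul_le_mul_of_nonneg_left (hC t ht) hc]

lemma sum {ι : Type*} {s : Finset ι} {f : ι → ℝ → ℝ} {α : ι → ℝ}
    (h : ∀ i ∈ s, UpperMeanLE (f i) (α i)) :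
    UpperMeanLE (fun t => ∑ i ∈ s, f i t) (∑ i ∈ s, α i) := by
  classical
  induction s using Finset.induction_on with
  | empty => exact ⟨fun t => by simp, 0, fun t _ => by simp⟩
  | insert i s hi ih =>
    simp only [sum_insert hi]
    exact (h i (mem_insert_self i s)).add
      (ih fun j hj => h j (mem_insert_of_mem hj))

lemma sum_range {f : ℕ → ℝ → ℝ} {m : ℕ} (hm : 0 < m) (h₀ : UpperMeanLE (f 0) α)
    (h : ∀ k ∈ Ico 1 m, UpperMeanLE (f k) 0) :
    UpperMeanLE (fun t => ∑ k ∈ range m, f k t) α := by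
  simp only [range_eq_Ico, sum_eq_sum_Ico_succ_bot hm]
  simpa using h₀.add (sum h)

lemma neg_le (hf : UpperMeanLE f α) (hf' : UpperMeanLE (fun s => -f s) β) : -β ≤ α := by
  obtain ⟨_, C, hC⟩ := hf
  obtain ⟨_, D, hD⟩ := hf'
  by_contra! hlt
  set t := (|C + D| + 1) / (-(α + β))
  have ht : 0 ≤ t := div_nonneg (by positivity) (by linarith)
  have hCt : -(α + β) * t = |C + D| + 1 := mul_div_cancel₀ _ (by linarith)
  have h₁ := hC t ht
  have h₂ := hD t ht
  rw [integral_neg] at h₂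
  linarith [le_abs_self (C + D)]

end UpperMeanLE

lemma upperMeanLE_of_eventually_le {f : ℝ → ℝ} {α : ℝ} (hf : Continuous f)
    (h : ∀ᶠ s in atTop, f s ≤ α) : UpperMeanLE f α := by
  obtain ⟨T₀, hT₀⟩ := eventually_atTop.1 h
  set T := max T₀ 0
  have hF : Continuous fun t => (∫ s in (0 : ℝ)..t, f s) - α * t :=
    (continuous_primitive (fun _ _ => hf.intervalIntegrable _ _) 0).sub
      (continuous_const.mul continuous_id)
  obtain ⟨C, hC⟩ := (isCompact_Icc (a := 0) (b := T)).bddAbove_image hF.continuousOn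
  have hCle : ∀ t ∈ Set.Icc 0 T, (∫ s in (0 : ℝ)..t, f s) - α * t ≤ C :=
    fun t ht => hC ⟨t, ht, rfl⟩
  refine ⟨fun t => hf.intervalIntegrable _ _, C, fun t ht => ?_⟩
  rcases le_total t T with htT | hTt
  · linarith [hCle t ⟨ht, htT⟩]
  · have htail : ∫ s in T..t, f s ≤ α * (t - T) := by
      simpa [mul_comm] using integral_mono_on hTt (hf.intervalIntegrable _ _)
        (intervalIntegrable_const (μ := MeasureTheory.volume)) fun s hs =>
          hT₀ s ((le_max_left _ _).trans hs.1)
    rw [← integral_add_adjacent_intervals (hf.intervalIntegrable 0 T) (hf.intervalIntegrable T t)]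
    linarith [hCle T ⟨le_max_right _ _, le_rfl⟩]

lemma exists_upperMeanLE_lt_of_limsup_lt {f : ℝ → ℝ} {M c : ℝ} (hf : Continuous f)
    (hM : ∀ t, 0 ≤ t → f t ≤ M) (h : limsup f atTop < c) :
    ∃ α < c, UpperMeanLE f α := by
  have hbdd : IsBoundedUnder (· ≤ ·) atTop f :=
    isBoundedUnder_of_eventually_le (eventually_atTop.2 ⟨0, hM⟩)
  refine ⟨(limsup f atTop + c) / 2, by linarith, upperMeanLE_of_eventually_le hf ?_⟩
  exact (eventually_lt_of_limsup_lt (by linarith) hbdd).mono fun _ => le_of_lt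

lemma eq_mul_exp_integral {x g : ℝ → ℝ} (hg : Continuous g)
    (hx : ∀ t, 0 ≤ t → HasDerivAt x (x t * g t) t) {t : ℝ} (ht : 0 ≤ t) :
    x t = x 0 * exp (∫ s in (0 : ℝ)..t, g s) := by
  set G := fun u => ∫ s in (0 : ℝ)..u, g s
  have hG : ∀ u, HasDerivAt G (g u) u := fun u =>
    integral_hasDerivAt_right (hg.intervalIntegrable _ _) (hg.stronglyMeasurableAtFilter _ _)
      hg.continuousAt
  have hconst : ∀ u ∈ Set.Icc 0 t, x u * exp (-G u) = x 0 * exp (-G 0) := by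
    refine constant_of_has_deriv_right_zero (fun u hu =>
      ((hx u hu.1).continuousAt.mul (hG u).neg.exp.continuousAt).continuousWithinAt)
      fun u hu => ?_
    have hd : HasDerivAt (fun v => x v * exp (-G v))
        (x u * g u * exp (-G u) + x u * (exp (-G u) * -g u)) u := (hx u hu.1).mul (hG u).neg.exp
    rw [show x u * g u * exp (-G u) + x u * (exp (-G u) * -g u) = 0 by ring] at hd
    exact hd.hasDerivWithinAt
  have h := hconst t ⟨ht, le_rfl⟩
  simp only [G, integral_same, neg_zero, exp_zero, mul_one] at h
  rw [← h, mul_assoc, ← exp_add, neg_add_cancel, exp_zero, mul_one]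

lemma upperMeanLE_zero_of_bounded {x g : ℝ → ℝ} {M : ℝ} (hg : Continuous g)
    (hx : ∀ t, 0 ≤ t → x t = x 0 * exp (∫ s in (0 : ℝ)..t, g s)) (hx₀ : 0 < x 0)
    (hM : ∀ t, 0 ≤ t → x t ≤ M) : UpperMeanLE g 0 := by
  refine ⟨fun t => hg.intervalIntegrable _ _, log (M / x 0), fun t ht => ?_⟩
  rw [zero_mul, zero_add, le_log_iff_exp_le (div_pos (hx₀.trans_le (hM 0 le_rfl)) hx₀),
    le_div_iff₀ hx₀, mul_comm, ← hx t ht]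
  exact hM t ht

lemma upperMeanLE_zero_of_le_mul_exp {x g : ℝ → ℝ} {c δ : ℝ} (hx : Continuous x)
    (hc : 0 ≤ c) (hδ : 0 < δ) (hg : UpperMeanLE g (-δ))
    (hxg : ∀ t, 0 ≤ t → x t ≤ c * exp (∫ s in (0 : ℝ)..t, g s)) : UpperMeanLE x 0 := by
  obtain ⟨_, C, hC⟩ := hg
  refine ⟨fun t => hx.intervalIntegrable _ _, c * exp C / δ, fun t ht => ?_⟩
  have hdecay : ∀ s ∈ Set.Icc 0 t, x s ≤ c * exp C * exp (-δ * s) := fun s hs => by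
    rw [mul_assoc, ← exp_add]
    exact (hxg s hs.1).trans
      (mul_le_mul_of_nonneg_left (exp_le_exp.2 (by linarith [hC s hs.1])) hc)
  have hexp : ∫ s in (0 : ℝ)..t, exp (-δ * s) = (1 - exp (-δ * t)) / δ := by
    rw [integral_comp_mul_left (fun s => exp s) (by linarith : -δ ≠ 0), integral_exp, mul_zero,
      exp_zero, smul_eq_mul]
    field_simp
    ring
  calc ∫ s in (0 : ℝ)..t, x s
      ≤ ∫ s in (0 : ℝ)..t, c * exp C * exp (-δ * s) :=
        integral_mono_on ht (hx.intervalIntegrable _ _)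
          ((by fun_prop : Continuous _).intervalIntegrable _ _) hdecay
    _ = c * exp C * ((1 - exp (-δ * t)) / δ) := by rw [integral_const_mul, hexp]
    _ ≤ 0 * t + c * exp C / δ := by
        rw [zero_mul, zero_add, mul_div_assoc']
        exact div_le_div_of_nonneg_right
          (mul_le_of_le_one_right (by positivity) (by linarith [exp_pos (-δ * t)])) hδ.le

lemma le_max_of_deriv_neg {x x' : ℝ → ℝ} {M : ℝ} (hx : ∀ t, 0 ≤ t → HasDerivAt x (x' t) t)
    (hM : ∀ t, 0 ≤ t → M ≤ x t → x' t < 0) {t : ℝ} (ht : 0 ≤ t) : x t ≤ max (x 0) M :=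
  image_le_of_deriv_right_lt_deriv_boundary' (B := fun _ => max (x 0) M) (B' := 0)
    (fun u hu => (hx u hu.1).continuousAt.continuousWithinAt)
    (fun u hu => (hx u hu.1).hasDerivWithinAt) (le_max_left _ _) continuousOn_const
    (fun _ _ => hasDerivWithinAt_const _ _ _)
    (fun u hu hxu => hM u hu.1 (hxu ▸ le_max_right _ _)) ⟨ht, le_rfl⟩

/-- Continued to negative times by its initial value, a trajectory becomes continuous on all of
`ℝ`, so that interval integrals and the fundamental theorem of calculus apply to it. -/
noncomputable def clamp (F : ℝ → ℕ → ℝ) (i : ℕ) (s : ℝ) : ℝ := F (max s 0) i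

@[simp]
lemma clamp_of_nonneg (F : ℝ → ℕ → ℝ) (i : ℕ) {s : ℝ} (hs : 0 ≤ s) : clamp F i s = F s i := by
  simp [clamp, hs]

lemma continuous_clamp {F : ℝ → ℕ → ℝ} {i : ℕ}
    (h : ∀ t, 0 ≤ t → ContinuousAt (fun s => F s i) t) : Continuous (clamp F i) :=
  continuous_iff_continuousAt.2 fun t =>
    ContinuousAt.comp (g := fun s => F s i) (f := fun s => max s 0) (h _ (le_max_right t 0))
      (continuous_id.max continuous_const).continuousAt

lemma limsup_clamp (F : ℝ → ℕ → ℝ) (i : ℕ) :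
    limsup (clamp F i) atTop = limsup (fun t => F t i) atTop :=
  limsup_congr ((eventually_ge_atTop 0).mono fun _ ht => clamp_of_nonneg F i ht)

noncomputable def hostRate (n : ℕ) (r a : ℕ → ℝ) (H P : ℝ → ℕ → ℝ) (i : ℕ) (s : ℝ) : ℝ :=
  r i - ∑ j ∈ range n, a j * clamp H j s - ∑ j ∈ Ico i n, clamp P j s

noncomputable def phageRate (e ν : ℕ → ℝ) (H : ℝ → ℕ → ℝ) (i : ℕ) (s : ℝ) : ℝ :=
  e i * ν i * (∑ j ∈ range (i + 1), clamp H j s - 1 / e i)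

section Rates

variable {n : ℕ} {r a : ℕ → ℝ} {H P : ℝ → ℕ → ℝ}

lemma hostRate_eq_add_sum {i : ℕ} (hi : i ≤ n) (s : ℝ) :
    hostRate n r a H P i s =
      hostRate n r a H P 0 s + ∑ j ∈ range i, clamp P j s - (r 0 - r i) := by
  simp only [hostRate, ← range_eq_Ico, ← sum_range_add_sum_Ico _ hi]
  ring

lemma neg_hostRate_zero (s : ℝ) :
    -hostRate n r a H P 0 s = ∑ j ∈ range n, (a j * clamp H j s + clamp P j s) - r 0 := by
  simp only [hostRate, ← range_eq_Ico, sum_add_distrib]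
  ring

end Rates

namespace isSolNIN

variable {n : ℕ} {r a e ν : ℕ → ℝ} {H P : ℝ → ℕ → ℝ}

lemma continuous_host (hsol : isSolNIN n r a e ν H P) {i : ℕ} (hi : i < n) :
    Continuous (clamp H i) :=
  continuous_clamp fun t ht => (hsol t ht i hi).1.continuousAt

lemma continuous_phage (hsol : isSolNIN n r a e ν H P) {i : ℕ} (hi : i < n) :
    Continuous (clamp P i) :=
  continuous_clamp fun t ht => (hsol t ht i hi).2.continuousAt

lemma continuous_hostRate (hsol : isSolNIN n r a e ν H P) (i : ℕ) :
    Continuous (hostRate n r a H P i) :=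
  (continuous_const.sub (continuous_finsetSum _ fun _ hj =>
      continuous_const.mul (hsol.continuous_host (mem_range.1 hj)))).sub
    (continuous_finsetSum _ fun _ hj => hsol.continuous_phage (mem_Ico.1 hj).2)

lemma continuous_phageRate (hsol : isSolNIN n r a e ν H P) {i : ℕ} (hi : i < n) :
    Continuous (phageRate e ν H i) :=
  continuous_const.mul ((continuous_finsetSum _ fun _ hj =>
    hsol.continuous_host ((mem_range.1 hj).trans_le hi)).sub continuous_const)

lemma hasDerivAt_host (hsol : isSolNIN n r a e ν H P) {i : ℕ} (hi : i < n) {t : ℝ}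
    (ht : 0 ≤ t) : HasDerivAt (fun s => H s i) (H t i * hostRate n r a H P i t) t := by
  simpa [hostRate, ht] using (hsol t ht i hi).1

lemma hasDerivAt_phage (hsol : isSolNIN n r a e ν H P) {i : ℕ} (hi : i < n) {t : ℝ}
    (ht : 0 ≤ t) : HasDerivAt (fun s => P s i) (P t i * phageRate e ν H i t) t := by
  convert (hsol t ht i hi).2 using 1
  simp only [phageRate, ht, clamp_of_nonneg]
  ring

lemma host_eq_mul_exp (hsol : isSolNIN n r a e ν H P) {i : ℕ} (hi : i < n) {t : ℝ}
    (ht : 0 ≤ t) : H t i = H 0 i * exp (∫ s in (0 : ℝ)..t, hostRate n r a H P i s) :=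
  eq_mul_exp_integral (x := fun s => H s i) (hsol.continuous_hostRate i)
    (fun _ hs => hsol.hasDerivAt_host hi hs) ht

lemma phage_eq_mul_exp (hsol : isSolNIN n r a e ν H P) {i : ℕ} (hi : i < n) {t : ℝ}
    (ht : 0 ≤ t) : P t i = P 0 i * exp (∫ s in (0 : ℝ)..t, phageRate e ν H i s) :=
  eq_mul_exp_integral (x := fun s => P s i) (hsol.continuous_phageRate hi)
    (fun _ hs => hsol.hasDerivAt_phage hi hs) ht

lemma host_nonneg (hsol : isSolNIN n r a e ν H P) (h0 : ∀ i < n, 0 ≤ H 0 i ∧ 0 ≤ P 0 i)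
    {i : ℕ} (hi : i < n) {t : ℝ} (ht : 0 ≤ t) : 0 ≤ H t i := by
  rw [hsol.host_eq_mul_exp hi ht]
  exact mul_nonneg (h0 i hi).1 (exp_pos _).le

lemma phage_nonneg (hsol : isSolNIN n r a e ν H P) (h0 : ∀ i < n, 0 ≤ H 0 i ∧ 0 ≤ P 0 i)
    {i : ℕ} (hi : i < n) {t : ℝ} (ht : 0 ≤ t) : 0 ≤ P t i := by
  rw [hsol.phage_eq_mul_exp hi ht]
  exact mul_nonneg (h0 i hi).2 (exp_pos _).le

lemma hostRate_zero_le (hsol : isSolNIN n r a e ν H P) (h0 : ∀ i < n, 0 ≤ H 0 i ∧ 0 ≤ P 0 i)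
    (hn : 0 < n) (ha : ∀ i < n, 0 < a i) {t : ℝ} (ht : 0 ≤ t) :
    hostRate n r a H P 0 t ≤ r 0 - a 0 * H t 0 - P t 0 := by
  have hH : a 0 * H t 0 ≤ ∑ j ∈ range n, a j * clamp H j t := by
    simpa [ht] using single_le_sum (f := fun j => a j * clamp H j t)
      (fun j hj => by
        rw [clamp_of_nonneg H j ht]
        exact mul_nonneg (ha j (mem_range.1 hj)).le
          (hsol.host_nonneg h0 (mem_range.1 hj) ht))
      (mem_range.2 hn)
  have hP : P t 0 ≤ ∑ j ∈ Ico 0 n, clamp P j t := by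
    simpa [ht] using single_le_sum (f := fun j => clamp P j t)
      (fun j hj => by
        rw [clamp_of_nonneg P j ht]
        exact hsol.phage_nonneg h0 (mem_Ico.1 hj).2 ht)
      (mem_Ico.2 ⟨le_rfl, hn⟩)
  simp only [hostRate]
  linarith

lemma exists_host_bound (hsol : isSolNIN n r a e ν H P) (h0 : ∀ i < n, 0 ≤ H 0 i ∧ 0 ≤ P 0 i)
    (hn : 0 < n) (ha : ∀ i < n, 0 < a i) : ∃ M, ∀ t, 0 ≤ t → H t 0 ≤ M := by
  have ha₀ := ha 0 hn
  refine ⟨_, fun t ht => le_max_of_deriv_neg (M := |r 0| / a 0 + 1)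
    (fun t ht => hsol.hasDerivAt_host hn ht) (fun t ht hM => ?_) ht⟩
  have hpos : 0 < H t 0 := lt_of_lt_of_le (by positivity) hM
  have hlarge : |r 0| + a 0 ≤ a 0 * H t 0 := by
    rw [div_add_one ha₀.ne', div_le_iff₀ ha₀] at hM
    linarith
  refine mul_neg_of_pos_of_neg hpos ?_
  linarith [hsol.hostRate_zero_le h0 hn ha ht, hsol.phage_nonneg h0 hn ht, le_abs_self (r 0)]

lemma exists_phage_bound (hsol : isSolNIN n r a e ν H P) (h0 : ∀ i < n, 0 ≤ H 0 i ∧ 0 ≤ P 0 i)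
    (hn : 0 < n) (ha : ∀ i < n, 0 < a i) (he : 0 < e 0) (hν : 0 < ν 0) :
    ∃ M, ∀ t, 0 ≤ t → P t 0 ≤ M := by
  obtain ⟨MH, hMH⟩ := hsol.exists_host_bound h0 hn ha
  set k := e 0 * ν 0
  have hk : 0 < k := mul_pos he hν
  -- `k H + P` is a Lyapunov function: the predation term `k H P` cancels in its derivative.
  have hdecr : ∀ t, 0 ≤ t → k * MH + e 0 * |r 0| * MH + 1 ≤ k * H t 0 + P t 0 →
      k * (H t 0 * hostRate n r a H P 0 t) + P t 0 * phageRate e ν H 0 t < 0 := by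
    intro t ht hlarge
    have hH := hsol.host_nonneg h0 hn ht
    have hHM := hMH t ht
    have hg := mul_le_mul_of_nonneg_left (hsol.hostRate_zero_le h0 hn ha ht)
      (mul_nonneg hk.le hH)
    have hp : phageRate e ν H 0 t = k * H t 0 - ν 0 := by
      simp [phageRate, ht, k]
      field_simp
    have hP : e 0 * |r 0| * MH + 1 ≤ P t 0 := by nlinarith
    have hrH : r 0 * H t 0 ≤ |r 0| * MH :=
      (mul_le_mul_of_nonneg_right (le_abs_self _) hH).trans
        (mul_le_mul_of_nonneg_left hHM (abs_nonneg _))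
    rw [hp]
    nlinarith [mul_le_mul_of_nonneg_left hrH hk.le, mul_le_mul_of_nonneg_left hP hν.le,
      mul_nonneg (mul_nonneg hk.le (ha 0 hn).le) (mul_nonneg hH hH)]
  refine ⟨max (k * H 0 0 + P 0 0) (k * MH + e 0 * |r 0| * MH + 1), fun t ht => ?_⟩
  have hV := le_max_of_deriv_neg (x := fun t => k * H t 0 + P t 0)
    (fun t ht => ((hsol.hasDerivAt_host hn ht).const_mul k).add (hsol.hasDerivAt_phage hn ht))
    hdecr ht
  linarith [mul_nonneg hk.le (hsol.host_nonneg h0 hn ht)]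

lemma host_upperMeanLE_zero (hsol : isSolNIN n r a e ν H P)
    (h0 : ∀ i < n, 0 ≤ H 0 i ∧ 0 ≤ P 0 i) {j : ℕ} (hj : j < n) {β : ℝ}
    (hg₀ : UpperMeanLE (hostRate n r a H P 0) 0)
    (hP : UpperMeanLE (fun s => ∑ k ∈ range j, clamp P k s) β) (hβ : β < r 0 - r j) :
    UpperMeanLE (clamp H j) 0 := by
  have hg : UpperMeanLE (hostRate n r a H P j) (0 + β - (r 0 - r j)) := by
    rw [show hostRate n r a H P j = _ from funext (hostRate_eq_add_sum hj.le)]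
    exact (hg₀.add hP).sub_const _
  refine upperMeanLE_zero_of_le_mul_exp (hsol.continuous_host hj) (h0 j hj).1
    (sub_pos.2 hβ) (hg.mono (by linarith)) fun t ht => ?_
  rw [clamp_of_nonneg H j ht, hsol.host_eq_mul_exp hj ht]

lemma phage_upperMeanLE_zero (hsol : isSolNIN n r a e ν H P)
    (h0 : ∀ i < n, 0 ≤ H 0 i ∧ 0 ≤ P 0 i) {i : ℕ} (hi : i < n) (he : 0 < e i) (hν : 0 < ν i)
    {α : ℝ} (hH : UpperMeanLE (fun s => ∑ k ∈ range (i + 1), clamp H k s) α)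
    (hα : α < 1 / e i) : UpperMeanLE (clamp P i) 0 := by
  have hp : UpperMeanLE (phageRate e ν H i) (e i * ν i * (α - 1 / e i)) :=
    (hH.sub_const _).const_mul (by positivity)
  refine upperMeanLE_zero_of_le_mul_exp (hsol.continuous_phage hi) (h0 i hi).2
    (mul_pos (mul_pos he hν) (sub_pos.2 hα)) (hp.mono (by linarith)) fun t ht => ?_
  rw [clamp_of_nonneg P i ht, hsol.phage_eq_mul_exp hi ht]

lemma host_upperMeanLE_of_phage_bound (hsol : isSolNIN n r a e ν H P) (hn : 0 < n)
    (he : 0 < e 0) (hν : 0 < ν 0) (hP₀ : 0 < P 0 0) {M : ℝ} (hM : ∀ t, 0 ≤ t → P t 0 ≤ M) :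
    UpperMeanLE (clamp H 0) (1 / e 0) := by
  have hp : UpperMeanLE (phageRate e ν H 0) 0 := upperMeanLE_zero_of_bounded
    (hsol.continuous_phageRate hn) (fun t ht => hsol.phage_eq_mul_exp hn ht) hP₀ hM
  have hH : clamp H 0 = fun s => (e 0 * ν 0)⁻¹ * phageRate e ν H 0 s + 1 / e 0 := by
    funext s
    simp only [phageRate, zero_add, range_one, sum_singleton]
    field_simp
    ring
  rw [hH]
  simpa using (hp.const_mul (by positivity : 0 ≤ (e 0 * ν 0)⁻¹)).add_const (1 / e 0)

lemma upperMeanLE_zero_of_one_le (hsol : isSolNIN n r a e ν H P)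
    (h0 : ∀ i < n, 0 ≤ H 0 i ∧ 0 ≤ P 0 i) (he : ∀ i < n, 0 < e i) (hν : ∀ i < n, 0 < ν i)
    {α β : ℝ} (hg₀ : UpperMeanLE (hostRate n r a H P 0) 0) (hH : UpperMeanLE (clamp H 0) α)
    (hP : UpperMeanLE (clamp P 0) β) (hα : ∀ i, 1 ≤ i → i < n → α < 1 / e i)
    (hβ : ∀ i, 1 ≤ i → i < n → β < r 0 - r i) :
    ∀ j, 1 ≤ j → j < n → UpperMeanLE (clamp H j) 0 ∧ UpperMeanLE (clamp P j) 0 := by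
  intro j
  induction j using Nat.strong_induction_on with
  | _ j ih =>
  intro hj1 hjn
  have hHj : UpperMeanLE (clamp H j) 0 :=
    hsol.host_upperMeanLE_zero h0 hjn hg₀ (UpperMeanLE.sum_range hj1 hP fun k hk =>
      (ih k (mem_Ico.1 hk).2 (mem_Ico.1 hk).1 ((mem_Ico.1 hk).2.trans hjn)).2) (hβ j hj1 hjn)
  refine ⟨hHj, hsol.phage_upperMeanLE_zero h0 hjn (he j hjn) (hν j hjn)
    (UpperMeanLE.sum_range j.succ_pos hH fun k hk => ?_) (hα j hj1 hjn)⟩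
  obtain ⟨hk1, hkj⟩ := mem_Ico.1 hk
  rcases Nat.lt_succ_iff_lt_or_eq.1 hkj with hlt | rfl
  · exact (ih k hlt hk1 (hlt.trans hjn)).1
  · exact hHj

lemma le_of_upperMeanLE (hsol : isSolNIN n r a e ν H P)
    (h0 : ∀ i < n, 0 ≤ H 0 i ∧ 0 ≤ P 0 i) (hn : 0 < n) (ha : ∀ i < n, 0 < a i)
    (he : ∀ i < n, 0 < e i) (hν : ∀ i < n, 0 < ν i) (hH₀ : 0 < H 0 0) {α β : ℝ}
    (hH : UpperMeanLE (clamp H 0) α) (hP : UpperMeanLE (clamp P 0) β)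
    (hα : ∀ i, 1 ≤ i → i < n → α < 1 / e i) (hβ : ∀ i, 1 ≤ i → i < n → β < r 0 - r i) :
    r 0 ≤ a 0 * α + β := by
  obtain ⟨M, hM⟩ := hsol.exists_host_bound h0 hn ha
  have hg₀ : UpperMeanLE (hostRate n r a H P 0) 0 := upperMeanLE_zero_of_bounded
    (hsol.continuous_hostRate 0) (fun t ht => hsol.host_eq_mul_exp hn ht) hH₀ hM
  have htail := hsol.upperMeanLE_zero_of_one_le h0 he hν hg₀ hH hP hα hβ
  have hneg : UpperMeanLE (fun s => -hostRate n r a H P 0 s) (a 0 * α + β - r 0) := by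
    simp_rw [neg_hostRate_zero]
    refine (UpperMeanLE.sum_range hn ((hH.const_mul (ha 0 hn).le).add hP)
      fun k hk => ?_).sub_const _
    obtain ⟨hk1, hkn⟩ := mem_Ico.1 hk
    simpa using ((htail k hk1 hkn).1.const_mul (ha k hkn).le).add (htail k hk1 hkn).2
  linarith [hg₀.neg_le hneg]

end isSolNIN

lemma HstarNIN_nonneg {n : ℕ} {e : ℕ → ℝ} (he : ∀ i < n, 0 < e i)
    (heord : ∀ i, i + 1 < n → e (i + 1) < e i) {j : ℕ} (hj : j < n) : 0 ≤ HstarNIN e j := by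
  cases j with
  | zero => exact (one_div_pos.2 (he 0 hj)).le
  | succ k => exact sub_nonneg.2 (one_div_le_one_div_of_le (he _ hj) (heord k hj).le)

lemma div_le_QNIN {n : ℕ} {a e : ℕ → ℝ} (hn : 0 < n) (ha : ∀ i < n, 0 < a i)
    (he : ∀ i < n, 0 < e i) (heord : ∀ i, i + 1 < n → e (i + 1) < e i) :
    a 0 / e 0 ≤ QNIN n a e :=
  calc a 0 / e 0 = a 0 * HstarNIN e 0 := by rw [HstarNIN, mul_one_div]
    _ ≤ QNIN n a e := single_le_sum (f := fun j => a j * HstarNIN e j)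
      (fun j hj => mul_nonneg (ha j (mem_range.1 hj)).le
        (HstarNIN_nonneg he heord (mem_range.1 hj))) (mem_range.2 hn)

lemma div_lt_of_QNIN_lt {n : ℕ} {r a e : ℕ → ℝ} (hn : 0 < n) (ha : ∀ i < n, 0 < a i)
    (he : ∀ i < n, 0 < e i) (heord : ∀ i, i + 1 < n → e (i + 1) < e i)
    (hr : AntitoneOn r (Set.Iic (n - 1))) (hQ : QNIN n a e < r (n - 1)) :
    a 0 / e 0 < r 0 :=
  (div_le_QNIN hn ha he heord).trans_lt (hQ.trans_le (hr (by simp) (by simp) (Nat.zero_le _)))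

theorem statement8_general
    (n : ℕ) (hn : 0 < n) (r a e ν : ℕ → ℝ)
    (ha : ∀ i < n, 0 < a i)
    (he : ∀ i < n, 0 < e i) (hν : ∀ i < n, 0 < ν i)
    (heord : ∀ i, i + 1 < n → e (i + 1) < e i)
    (hrord : ∀ i, i + 1 < n → r (i + 1) < r i)
    (hQ : QNIN n a e < r (n - 1))
    (H P : ℝ → ℕ → ℝ) (hsol : isSolNIN n r a e ν H P)
    (h0 : ∀ i < n, 0 ≤ H 0 i ∧ 0 ≤ P 0 i) :
    (0 < H 0 0 → 1 / e 0 ≤ Filter.limsup (fun t => H t 0) Filter.atTop) ∧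
    (0 < H 0 0 → 0 < P 0 0 →
      min (r 0 - r 1) ((r 0 * e 0 - a 0) / e 0)
        ≤ Filter.limsup (fun t => P t 0) Filter.atTop) := by
  have he_anti : StrictAntiOn e (Set.Iic (n - 1)) :=
    strictAntiOn_Iic_of_succ_lt fun m hm => heord m (by omega)
  have hr_anti : StrictAntiOn r (Set.Iic (n - 1)) :=
    strictAntiOn_Iic_of_succ_lt fun m hm => hrord m (by omega)
  have hae := div_lt_of_QNIN_lt hn ha he heord hr_anti.antitoneOn hQ
  have he_inv : ∀ i, 1 ≤ i → i < n → 1 / e 0 < 1 / e i := fun i hi hin =>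
    one_div_lt_one_div_of_lt (he i hin) (he_anti (by simp) (by simp; omega) hi)
  have hr_le : ∀ i, 1 ≤ i → i < n → r i ≤ r 1 := fun i hi hin =>
    hr_anti.antitoneOn (by simp; omega) (by simp; omega) hi
  refine ⟨fun hH₀ => ?_, fun hH₀ hP₀ => ?_⟩
  · by_contra! hlt
    obtain ⟨MH, hMH⟩ := hsol.exists_host_bound h0 hn ha
    obtain ⟨α, hα, hHα⟩ := exists_upperMeanLE_lt_of_limsup_lt (hsol.continuous_host hn)
      (fun t ht => (clamp_of_nonneg H 0 ht).trans_le (hMH t ht)) (limsup_clamp H 0 ▸ hlt)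
    have hP := hsol.phage_upperMeanLE_zero h0 hn (he 0 hn) (hν 0 hn) (by simpa using hHα) hα
    have hr₀ := hsol.le_of_upperMeanLE h0 hn ha he hν hH₀ hHα hP
      (fun i hi hin => hα.trans (he_inv i hi hin))
      (fun i hi hin => by linarith [hr_anti (by simp) (by simp; omega) hi])
    linarith [mul_lt_mul_of_pos_left hα (ha 0 hn), mul_one_div (a 0) (e 0)]
  · by_contra! hlt
    obtain ⟨MP, hMP⟩ := hsol.exists_phage_bound h0 hn ha (he 0 hn) (hν 0 hn)
    obtain ⟨β, hβ, hPβ⟩ := exists_upperMeanLE_lt_of_limsup_lt (hsol.continuous_phage hn)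
      (fun t ht => (clamp_of_nonneg P 0 ht).trans_le (hMP t ht)) (limsup_clamp P 0 ▸ hlt)
    have hr₀ := hsol.le_of_upperMeanLE h0 hn ha he hν hH₀
      (hsol.host_upperMeanLE_of_phage_bound hn (he 0 hn) (hν 0 hn) hP₀ hMP) hPβ he_inv
      fun i hi hin => by
        linarith [hr_le i hi hin, min_le_left (r 0 - r 1) ((r 0 * e 0 - a 0) / e 0)]
    have hmin := hβ.trans_le (min_le_right _ _)
    rw [sub_div, mul_div_cancel_right₀ _ (he 0 hn).ne'] at hmin
    linarith [mul_one_div (a 0) (e 0)]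

/-- weak persistence of the first host and virus in the NIN system.
If `H_1(0) > 0` then `limsup H_1 ≥ 1/e_1`; if moreover `P_1(0) > 0` then
`limsup P_1 ≥ min {r_1 − r_2, (r_1 e_1 − a_1)/e_1}`. -/
theorem statement8
    (n : ℕ) (hn : 0 < n) (r a e ν : ℕ → ℝ)
    (hr : ∀ i < n, 0 < r i) (ha : ∀ i < n, 0 < a i)
    (he : ∀ i < n, 0 < e i) (hν : ∀ i < n, 0 < ν i)
    (heord : ∀ i, i + 1 < n → e (i + 1) < e i)
    (hrord : ∀ i, i + 1 < n → r (i + 1) < r i)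
    (hQ : QNIN n a e < r (n - 1))
    (H P : ℝ → ℕ → ℝ) (hsol : isSolNIN n r a e ν H P)
    (h0 : ∀ i < n, 0 ≤ H 0 i ∧ 0 ≤ P 0 i) :
    (0 < H 0 0 → 1 / e 0 ≤ Filter.limsup (fun t => H t 0) Filter.atTop) ∧
    (0 < H 0 0 → 0 < P 0 0 →
      min (r 0 - r 1) ((r 0 * e 0 - a 0) / e 0)
        ≤ Filter.limsup (fun t => P t 0) Filter.atTop) :=
  statement8_general n hn r a e ν ha he hν heord hrord hQ H P hsol h0
end
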